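/- Tensor net lemma: Let N = n^d and K ⊆ B₂^N the absolute convex hull of the rank-one tensors {y₁ ⊗ ⋯ ⊗ y_d : y_j ∈ B₂^n}. Then there exist M points x₁,…,x_M of norm at most 1 (rank-one tensors), with ln M ≤ 3nd(1 + ln d), such that K ⊆ e · absconv{x₁,…,x_M}. -/

import Mathlib

open scoped Pointwise

/-- The rank-one tensor `y₁ ⊗ ⋯ ⊗ y_d ∈ ℝ^{n^d}`, realized as the element of
`EuclideanSpace ℝ (Fin d → Fin n)` with entries `(y₁)_{i₁} ⋯ (y_d)_{i_d}`. -/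
noncomputable def tensorProd (n d : ℕ) (y : Fin d → EuclideanSpace ℝ (Fin n)) :
    EuclideanSpace ℝ (Fin d → Fin n) :=
  (WithLp.equiv 2 ((Fin d → Fin n) → ℝ)).symm fun i => ∏ l, y l (i l)

/-- The absolute convex hull of a set: all finite combinations `Σ c_k • p_k`
with `p_k ∈ S` and `Σ |c_k| ≤ 1`. -/
def absConv {V : Type*} [AddCommGroup V] [Module ℝ V] (S : Set V) : Set V :=
  {z | ∃ (k : ℕ) (c : Fin k → ℝ) (p : Fin k → V),
    (∀ i, p i ∈ S) ∧ (∑ i, |c i|) ≤ 1 ∧ z = ∑ i, c i • p i}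

/-!
Take an `ε`-net `s` of `B₂^n` with `ε = 1/(3d)`; the volume argument gives `|s| ≤ (1 + 6d)^n`,
and the `x_k` are the `|s|^d` tensor products of net points. Writing each factor as
`y_l = z_l + ε u_l` with `z_l ∈ s`, `‖u_l‖ ≤ 1` and expanding multilinearly, every rank-one tensor
lies in `A + δ K`, where `A = absconv{x_k}`, `K` is the absolute convex hull of the rank-one
tensors and `δ = (1 + ε)^d - 1 ≤ e^{1/3} - 1 ≤ 1/2`. Iterating `K ⊆ A + δ K` and using that `A`
is closed gives `K ⊆ (1 - δ)⁻¹ A ⊆ e A`.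
-/

open Metric Finset
open scoped NNReal ENNReal

section AbsConv

variable {V : Type*} [AddCommGroup V] [Module ℝ V]

theorem zero_mem_absConv (S : Set V) : (0 : V) ∈ absConv S :=
  ⟨0, 0, 0, fun i => i.elim0, by simp, by simp⟩

theorem subset_absConv (S : Set V) : S ⊆ absConv S := fun p hp =>
  ⟨1, 1, fun _ => p, fun _ => hp, by simp, by simp⟩

theorem absConvex_absConv (S : Set V) : AbsConvex ℝ (absConv S) := by
  refine ⟨?_, ?_⟩
  · rintro a ha _ ⟨_, ⟨k, c, p, hp, hc, rfl⟩, rfl⟩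
    refine ⟨k, a • c, p, hp, ?_, by simp [smul_sum, smul_smul]⟩
    calc ∑ i, |(a • c) i| = ‖a‖ * ∑ i, |c i| := by simp [abs_mul, mul_sum]
      _ ≤ 1 := mul_le_one₀ ha (by positivity) hc
  · rintro _ ⟨k, c, p, hp, hc, rfl⟩ _ ⟨k', c', p', hp', hc', rfl⟩ a b ha hb hab
    refine ⟨k + k', Fin.append (a • c) (b • c'), Fin.append p p', ?_, ?_, ?_⟩
    · exact Fin.addCases (by simpa using hp) (by simpa using hp')
    · simp only [Fin.sum_univ_add, Fin.append_left, Fin.append_right, Pi.smul_apply,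
        smul_eq_mul, abs_mul, abs_of_nonneg ha, abs_of_nonneg hb, ← mul_sum]
      nlinarith
    · simp [Fin.sum_univ_add, smul_sum, smul_smul]

theorem AbsConvex.sum_smul_mem_smul {T : Set V} (hT : AbsConvex ℝ T) (h0 : (0 : V) ∈ T)
    {ι : Type*} {s : Finset ι} {c : ι → ℝ} {p : ι → V} (hp : ∀ j ∈ s, p j ∈ T) :
    ∑ j ∈ s, c j • p j ∈ (∑ j ∈ s, |c j|) • T := by
  induction s using Finset.cons_induction with
  | empty => simpa using Set.zero_mem_smul_set h0
  | cons a s ha ih =>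
    rw [sum_cons, sum_cons, hT.2.add_smul (abs_nonneg _) (sum_nonneg fun _ _ => abs_nonneg _)]
    refine Set.add_mem_add ?_ (ih fun j hj => hp j (mem_cons_of_mem hj))
    rw [← hT.1.smul_congr (a := c a) (by simp)]
    exact Set.smul_mem_smul_set (hp a (mem_cons_self a s))

theorem AbsConvex.sum_smul_mem {T : Set V} (hT : AbsConvex ℝ T) (h0 : (0 : V) ∈ T)
    {ι : Type*} {s : Finset ι} {c : ι → ℝ} {p : ι → V} (hp : ∀ j ∈ s, p j ∈ T)
    (hc : ∑ j ∈ s, |c j| ≤ 1) : ∑ j ∈ s, c j • p j ∈ T := by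
  have hc' : ‖∑ j ∈ s, |c j|‖ ≤ ‖(1 : ℝ)‖ := by
    rwa [Real.norm_of_nonneg (sum_nonneg fun _ _ => abs_nonneg _), norm_one]
  simpa using hT.1.smul_mono hc' (hT.sum_smul_mem_smul h0 hp)

theorem absConv_subset {S T : Set V} (hT : AbsConvex ℝ T) (h0 : (0 : V) ∈ T) (hST : S ⊆ T) :
    absConv S ⊆ T := by
  rintro _ ⟨k, c, p, hp, hc, rfl⟩
  exact hT.sum_smul_mem h0 (fun j _ => hST (hp j)) hc

theorem sum_smul_mem_smul_absConv {S : Set V} {ι : Type*} {s : Finset ι} {c : ι → ℝ}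
    {p : ι → V} (hp : ∀ j ∈ s, p j ∈ S) :
    ∑ j ∈ s, c j • p j ∈ (∑ j ∈ s, |c j|) • absConv S :=
  (absConvex_absConv S).sum_smul_mem_smul (zero_mem_absConv S) fun j hj =>
    subset_absConv S (hp j hj)

theorem mem_absConv_range_iff {ι : Type*} [Fintype ι] {x : ι → V} {z : V} :
    z ∈ absConv (Set.range x) ↔ ∃ c : ι → ℝ, ∑ m, |c m| ≤ 1 ∧ ∑ m, c m • x m = z := by
  classical
  constructor
  · rintro ⟨k, c, p, hp, hc, rfl⟩
    choose g hg using hp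
    refine ⟨fun m => ∑ i with g i = m, c i, ?_, ?_⟩
    · calc ∑ m, |∑ i with g i = m, c i| ≤ ∑ m, ∑ i with g i = m, |c i| :=
            sum_le_sum fun m _ => abs_sum_le_sum_abs _ _
        _ = ∑ i, |c i| := sum_fiberwise _ _ _
        _ ≤ 1 := hc
    · simp_rw [sum_smul, ← hg]
      rw [← sum_fiberwise univ g (fun i => c i • x (g i))]
      refine sum_congr rfl fun m _ => sum_congr rfl fun i hi => ?_
      rw [(mem_filter.1 hi).2]
  · rintro ⟨c, hc, rfl⟩
    exact (absConvex_absConv _).sum_smul_mem (zero_mem_absConv _)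
      (fun m _ => subset_absConv _ (Set.mem_range_self m)) hc

theorem isCompact_absConv_range [TopologicalSpace V] [ContinuousAdd V] [ContinuousSMul ℝ V]
    {ι : Type*} [Fintype ι] (x : ι → V) : IsCompact (absConv (Set.range x)) := by
  have himage : absConv (Set.range x) =
      (fun c : ι → ℝ => ∑ m, c m • x m) '' {c | ∑ m, |c m| ≤ 1} := by
    ext z
    simp only [mem_absConv_range_iff, Set.mem_image, Set.mem_ofPred_eq]
  have hbounded : Bornology.IsBounded {c : ι → ℝ | ∑ m, |c m| ≤ 1} := by
    refine (isBounded_closedBall (x := 0) (r := 1)).subset fun c hc => ?_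
    rw [mem_closedBall_zero_iff, pi_norm_le_iff_of_nonneg zero_le_one]
    exact fun m => (single_le_sum (fun m _ => abs_nonneg (c m)) (mem_univ m)).trans hc
  rw [himage]
  exact (isCompact_of_isClosed_isBounded
    (isClosed_le (by fun_prop) continuous_const) hbounded).image (by fun_prop)

end AbsConv

theorem absConv_subset_of_subset_add_smul_absConv {V : Type*} [NormedAddCommGroup V]
    [NormedSpace ℝ V] {S A : Set V} {δ : ℝ} (hA : AbsConvex ℝ A) (hA0 : (0 : V) ∈ A)
    (hA_closed : IsClosed A) (hS : S ⊆ closedBall 0 1) (hδ0 : 0 ≤ δ) (hδ1 : δ < 1)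
    (h : S ⊆ A + δ • absConv S) : absConv S ⊆ (1 - δ)⁻¹ • A := by
  set R := (1 - δ)⁻¹
  have hR : 0 ≤ R := inv_nonneg.2 (by linarith)
  have hRA : AbsConvex ℝ (R • A) := ⟨hA.1.smul R, hA.2.smul R⟩
  have hRA0 : (0 : V) ∈ R • A := Set.zero_mem_smul_set hA0
  have approx : ∀ m : ℕ, S ⊆ R • A + closedBall 0 (δ ^ m) := by
    intro m
    induction m with
    | zero => exact fun t ht => ⟨0, hRA0, t, by simpa using hS ht, zero_add t⟩
    | succ m ih =>
      have hT : AbsConvex ℝ (R • A + closedBall (0 : V) (δ ^ m)) :=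
        ⟨hRA.1.add balanced_closedBall_zero, hRA.2.add (convex_closedBall _ _)⟩
      have hT0 : (0 : V) ∈ R • A + closedBall 0 (δ ^ m) :=
        ⟨0, hRA0, 0, mem_closedBall_self (by positivity), zero_add 0⟩
      calc S ⊆ A + δ • absConv S := h
        _ ⊆ A + δ • (R • A + closedBall 0 (δ ^ m)) := by
          gcongr; exact absConv_subset hT hT0 ih
        _ = ((1 : ℝ) • A + (δ * R) • A) + closedBall 0 (δ ^ (m + 1)) := by
          rw [smul_add, smul_smul, _root_.smul_closedBall _ _ (by positivity), add_assoc, one_smul,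
            smul_zero, Real.norm_of_nonneg hδ0, pow_succ']
        _ = R • A + closedBall 0 (δ ^ (m + 1)) := by
          rw [← hA.2.add_smul zero_le_one (by positivity)]
          have : (1 - δ) * R = 1 := mul_inv_cancel₀ (by linarith)
          congr 2
          linarith
  have hS_RA : S ⊆ R • A := by
    intro t ht
    rw [← (hA_closed.smul₀ R).closure_eq, Metric.mem_closure_iff]
    intro η hη
    obtain ⟨m, hm⟩ := exists_pow_lt_of_lt_one hη hδ1
    obtain ⟨a, ha, w, hw, rfl⟩ := approx m ht
    refine ⟨a, ha, ?_⟩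
    rw [dist_eq_norm, add_sub_cancel_left]
    exact (mem_closedBall_zero_iff.1 hw).trans_lt hm
  exact absConv_subset hRA hRA0 hS_RA

section Packing

open MeasureTheory Module

variable {E : Type*} [NormedAddCommGroup E] [NormedSpace ℝ E] [FiniteDimensional ℝ E]

theorem card_le_of_isSeparated_closedBall {ε : ℝ≥0} (hε : 0 < ε) {s : Finset E}
    (hs : ↑s ⊆ closedBall (0 : E) 1) (hsep : IsSeparated ε (s : Set E)) :
    (#s : ℝ) ≤ (1 + 2 / ε) ^ finrank ℝ E := by
  borelize E
  set μ : Measure E := Measure.addHaar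
  set r : ℝ := ε / 2 with hr_def
  have hr : 0 < r := by positivity
  have hdisj : (s : Set E).PairwiseDisjoint (closedBall · r) := by
    intro a ha b hb hab
    refine closedBall_disjoint_closedBall ?_
    have := hsep ha hb hab
    dsimp only at this
    rw [edist_dist, ← ENNReal.ofReal_coe_nnreal, ENNReal.ofReal_lt_ofReal_iff_of_nonneg
      ε.coe_nonneg] at this
    linarith
  have hunion : (⋃ c ∈ s, closedBall c r) ⊆ closedBall (0 : E) (1 + r) := by
    simp only [Set.iUnion_subset_iff]
    intro c hc
    exact closedBall_subset_closedBall' (by linarith [mem_closedBall.1 (hs hc)])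
  have hvol : (#s : ℝ≥0∞) * ENNReal.ofReal (r ^ finrank ℝ E) * μ (ball 0 1)
      ≤ ENNReal.ofReal ((1 + r) ^ finrank ℝ E) * μ (ball 0 1) := by
    calc (#s : ℝ≥0∞) * ENNReal.ofReal (r ^ finrank ℝ E) * μ (ball 0 1)
        = μ (⋃ c ∈ s, closedBall c r) := by
          rw [measure_biUnion_finset hdisj fun _ _ => measurableSet_closedBall]
          simp [Measure.addHaar_closedBall μ _ hr.le, mul_assoc]
      _ ≤ μ (closedBall 0 (1 + r)) := measure_mono hunion
      _ = _ := Measure.addHaar_closedBall μ _ (by positivity)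
  rw [ENNReal.mul_le_mul_iff_left (measure_ball_pos μ 0 one_pos).ne' measure_ball_lt_top.ne,
    ← ENNReal.ofReal_natCast, ← ENNReal.ofReal_mul (by positivity),
    ENNReal.ofReal_le_ofReal_iff (by positivity), ← le_div_iff₀ (by positivity), ← div_pow]
    at hvol
  refine hvol.trans_eq ?_
  rw [hr_def]
  congr 1
  field_simp
  ring

theorem encard_le_of_isSeparated_closedBall {ε : ℝ≥0} (hε : 0 < ε) {C : Set E}
    (hC : C ⊆ closedBall (0 : E) 1) (hsep : IsSeparated ε C) :
    C.encard ≤ ⌊(1 + 2 / ε) ^ finrank ℝ E⌋₊ := by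
  have hfinset : ∀ t : Finset E, ↑t ⊆ C → #t ≤ ⌊(1 + 2 / ε) ^ finrank ℝ E⌋₊ := fun t ht =>
    Nat.le_floor (card_le_of_isSeparated_closedBall hε (ht.trans hC) (hsep.subset ht))
  have hfin : C.Finite := by
    by_contra hinf
    obtain ⟨t, ht, hcard⟩ := Set.Infinite.exists_subset_card_eq hinf
      (⌊(1 + 2 / ε) ^ finrank ℝ E⌋₊ + 1)
    have := hfinset t ht
    omega
  rw [← hfin.coe_toFinset, Set.encard_coe_eq_coe_finsetCard]
  exact_mod_cast hfinset _ (by simp)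

theorem exists_finset_isCover_closedBall {ε : ℝ≥0} (hε : 0 < ε) :
    ∃ s : Finset E, ↑s ⊆ closedBall (0 : E) 1 ∧ IsCover ε (closedBall (0 : E) 1) s ∧
      (#s : ℝ) ≤ (1 + 2 / ε) ^ finrank ℝ E := by
  set C := maximalSeparatedSet ε (closedBall (0 : E) 1)
  have hpacking : packingNumber ε (closedBall (0 : E) 1) ≤ ⌊(1 + 2 / ε) ^ finrank ℝ E⌋₊ :=
    iSup₂_le fun D hD => iSup_le fun hsep => encard_le_of_isSeparated_closedBall hε hD hsep
  have hfinite := ne_top_of_le_ne_top (ENat.natCast_ne_top _) hpacking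
  have hC : C.encard ≤ ⌊(1 + 2 / ε) ^ finrank ℝ E⌋₊ :=
    (encard_maximalSeparatedSet hfinite).trans_le hpacking
  have hfin : C.Finite := Set.encard_ne_top_iff.1 (ne_top_of_le_ne_top (ENat.natCast_ne_top _) hC)
  refine ⟨hfin.toFinset, by simpa using maximalSeparatedSet_subset,
    by simpa using isCover_maximalSeparatedSet hfinite, ?_⟩
  rw [hfin.encard_eq_coe_toFinset_card, Nat.cast_le] at hC
  exact (Nat.cast_le.2 hC).trans (Nat.floor_le (by positivity : (0 : ℝ) ≤ (1 + 2 / ε) ^ _))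

end Packing

section Tensor

variable {n d : ℕ}

theorem tensorProd_apply (y : Fin d → EuclideanSpace ℝ (Fin n)) (i : Fin d → Fin n) :
    tensorProd n d y i = ∏ l, y l (i l) := rfl

theorem norm_tensorProd (y : Fin d → EuclideanSpace ℝ (Fin n)) :
    ‖tensorProd n d y‖ = ∏ l, ‖y l‖ := by
  refine (sq_eq_sq₀ (norm_nonneg _) (prod_nonneg fun l _ => norm_nonneg _)).1 ?_
  simp_rw [EuclideanSpace.norm_sq_eq, ← prod_pow, EuclideanSpace.norm_sq_eq, prod_univ_sum,
    tensorProd_apply, Real.norm_eq_abs, sq_abs, prod_pow, Fintype.piFinset_univ]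

theorem tensorProd_add_smul (z u : Fin d → EuclideanSpace ℝ (Fin n)) (ε : ℝ) :
    tensorProd n d (z + ε • u) =
      ∑ S : Finset (Fin d), ε ^ #S • tensorProd n d (S.piecewise u z) := by
  ext i
  simp only [tensorProd_apply, WithLp.ofLp_sum, WithLp.ofLp_smul, Finset.sum_apply, Pi.smul_apply,
    smul_eq_mul, Pi.add_apply, WithLp.ofLp_add]
  simp_rw [add_comm ((z _).ofLp _), prod_add, powerset_univ, prod_mul_distrib, prod_const]
  refine sum_congr rfl fun S _ => ?_
  have hpiece : ∏ l, (S.piecewise u z l).ofLp (i l) =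
      ∏ l, S.piecewise (fun l => (u l).ofLp (i l)) (fun l => (z l).ofLp (i l)) l :=
    prod_congr rfl fun l _ => by by_cases hl : l ∈ S <;> simp [hl]
  rw [hpiece, prod_piecewise, univ_inter, mul_assoc]

variable (n d) in
def rankOneBall : Set (EuclideanSpace ℝ (Fin d → Fin n)) :=
  {t | ∃ y : Fin d → EuclideanSpace ℝ (Fin n), (∀ l, ‖y l‖ ≤ 1) ∧ t = tensorProd n d y}

theorem tensorProd_mem_rankOneBall {y : Fin d → EuclideanSpace ℝ (Fin n)} (hy : ∀ l, ‖y l‖ ≤ 1) :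
    tensorProd n d y ∈ rankOneBall n d :=
  ⟨y, hy, rfl⟩

theorem rankOneBall_subset_closedBall : rankOneBall n d ⊆ closedBall 0 1 := by
  rintro _ ⟨y, hy, rfl⟩
  rw [mem_closedBall_zero_iff, norm_tensorProd]
  exact prod_le_one (fun l _ => norm_nonneg _) fun l _ => hy l

theorem tensorProd_sub_mem_smul_absConv {y z : Fin d → EuclideanSpace ℝ (Fin n)} {ε : ℝ}
    (hε : 0 < ε) (hz : ∀ l, ‖z l‖ ≤ 1) (hyz : ∀ l, ‖y l - z l‖ ≤ ε) :
    tensorProd n d y - tensorProd n d z ∈ ((1 + ε) ^ d - 1) • absConv (rankOneBall n d) := by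
  set u := ε⁻¹ • (y - z)
  have hu : ∀ l, ‖u l‖ ≤ 1 := fun l => by
    simpa [u, norm_smul, abs_of_pos hε, inv_mul_le_one₀ hε] using hyz l
  have hyzu : y = z + ε • u := by simp [u, smul_inv_smul₀ hε.ne']
  have hmem : ∀ S : Finset (Fin d), tensorProd n d (S.piecewise u z) ∈ rankOneBall n d :=
    fun S => tensorProd_mem_rankOneBall fun l => by
      by_cases hl : l ∈ S
      · simpa [hl] using hu l
      · simpa [hl] using hz l
  have hexpand : tensorProd n d y - tensorProd n d z =
      ∑ S ∈ univ.erase ∅, ε ^ #S • tensorProd n d (S.piecewise u z) := by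
    rw [sum_erase_eq_sub (mem_univ _), hyzu, tensorProd_add_smul]
    simp
  have hmass : ∑ S ∈ univ.erase (∅ : Finset (Fin d)), |ε ^ #S| = (1 + ε) ^ d - 1 := by
    rw [sum_erase_eq_sub (mem_univ _)]
    simpa [abs_of_pos hε, add_comm] using Fintype.sum_pow_mul_eq_add_pow (Fin d) ε 1
  rw [hexpand, ← hmass]
  exact sum_smul_mem_smul_absConv fun S _ => hmem S

variable (n d) in
noncomputable def netTensors (s : Finset (EuclideanSpace ℝ (Fin n))) :
    Fin (Fintype.card (Fin d → s)) → EuclideanSpace ℝ (Fin d → Fin n) :=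
  fun k => tensorProd n d fun l => (Fintype.equivFin (Fin d → s)).symm k l

theorem tensorProd_mem_range_netTensors {s : Finset (EuclideanSpace ℝ (Fin n))}
    {z : Fin d → EuclideanSpace ℝ (Fin n)} (hz : ∀ l, z l ∈ s) :
    tensorProd n d z ∈ Set.range (netTensors n d s) :=
  ⟨Fintype.equivFin _ fun l => ⟨z l, hz l⟩, by simp [netTensors]⟩

theorem netTensors_mem_rankOneBall {s : Finset (EuclideanSpace ℝ (Fin n))}
    (hs : ↑s ⊆ closedBall (0 : EuclideanSpace ℝ (Fin n)) 1) (k : Fin (Fintype.card (Fin d → s))) :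
    netTensors n d s k ∈ rankOneBall n d :=
  tensorProd_mem_rankOneBall fun _ => mem_closedBall_zero_iff.1 (hs (Subtype.prop _))

theorem rankOneBall_subset_add_smul_absConv {s : Finset (EuclideanSpace ℝ (Fin n))} {ε : ℝ≥0}
    (hε : 0 < ε) (hs : ↑s ⊆ closedBall (0 : EuclideanSpace ℝ (Fin n)) 1)
    (hcov : IsCover ε (closedBall 0 1) (s : Set (EuclideanSpace ℝ (Fin n)))) :
    rankOneBall n d ⊆ absConv (Set.range (netTensors n d s)) +
      ((1 + (ε : ℝ)) ^ d - 1) • absConv (rankOneBall n d) := by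
  rintro _ ⟨y, hy, rfl⟩
  have hnear : ∀ l, ∃ z ∈ s, ‖y l - z‖ ≤ ε := fun l => by
    have := hcov.subset_iUnion_closedBall (mem_closedBall_zero_iff.2 (hy l))
    simpa [dist_eq_norm] using this
  choose z hzs hyz using hnear
  have hz : ∀ l, ‖z l‖ ≤ 1 := fun l => mem_closedBall_zero_iff.1 (hs (hzs l))
  exact ⟨tensorProd n d z, subset_absConv _ (tensorProd_mem_range_netTensors hzs), _,
    tensorProd_sub_mem_smul_absConv hε hz hyz, add_sub_cancel _ _⟩

end Tensor

section Estimates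

open Real

theorem one_add_inv_three_mul_pow_le (d : ℕ) : (1 + (3 * d : ℝ)⁻¹) ^ d ≤ 3 / 2 := by
  have hexp : exp (1 / 3) ≤ 3 / 2 := by
    have h := add_one_le_exp (-(1 / 3))
    rw [exp_neg] at h
    have := exp_pos (1 / 3)
    rw [le_inv_comm₀ (by norm_num) this] at h
    linarith
  have hexponent : (d : ℝ) * (3 * (d : ℝ))⁻¹ ≤ 1 / 3 := by
    rcases Nat.eq_zero_or_pos d with rfl | hd
    · norm_num
    · have : (d : ℝ) ≠ 0 := by positivity
      exact le_of_eq (by field_simp)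
  calc (1 + (3 * d : ℝ)⁻¹) ^ d ≤ exp ((3 * d)⁻¹) ^ d :=
        pow_le_pow_left₀ (by positivity) (by linarith [add_one_le_exp (3 * d : ℝ)⁻¹]) d
    _ = exp (d * (3 * (d : ℝ))⁻¹) := by rw [← exp_nat_mul]
    _ ≤ 3 / 2 := (exp_le_exp.2 hexponent).trans hexp

theorem log_one_add_six_mul_le {x : ℝ} (hx : 1 ≤ x) : log (1 + 6 * x) ≤ 3 * (1 + log x) := by
  have hlog7 : log 7 ≤ 3 := by
    rw [log_le_iff_le_exp (by norm_num), show (3 : ℝ) = (3 : ℕ) * 1 by norm_num, exp_nat_mul]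
    have h2 : (2 : ℝ) ≤ exp 1 := by linarith [add_one_le_exp (1 : ℝ)]
    calc (7 : ℝ) ≤ 2 ^ 3 := by norm_num
      _ ≤ exp 1 ^ 3 := by gcongr
  have hlogx : 0 ≤ log x := log_nonneg hx
  calc log (1 + 6 * x) ≤ log (7 * x) := log_le_log (by linarith) (by linarith)
    _ = log 7 + log x := log_mul (by norm_num) (by linarith)
    _ ≤ 3 * (1 + log x) := by linarith

theorem log_pow_le_of_le_one_add_six_mul_pow {m n d : ℕ} (hd : 0 < d)
    (hm : (m : ℝ) ≤ (1 + 6 * d) ^ n) : log ((m ^ d : ℕ) : ℝ) ≤ 3 * n * d * (1 + log d) := by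
  have hd1 : (1 : ℝ) ≤ d := by exact_mod_cast hd
  have hrhs : 0 ≤ 3 * (n : ℝ) * d * (1 + log d) := by
    have := log_nonneg hd1
    positivity
  rcases Nat.eq_zero_or_pos m with rfl | hm0
  · simpa [zero_pow hd.ne'] using hrhs
  have hlogm : log m ≤ n * (3 * (1 + log d)) :=
    calc log m ≤ log ((1 + 6 * d) ^ n) := log_le_log (by exact_mod_cast hm0) hm
      _ = n * log (1 + 6 * d) := log_pow _ _
      _ ≤ n * (3 * (1 + log d)) := by gcongr; exact log_one_add_six_mul_le hd1
  calc log ((m ^ d : ℕ) : ℝ) = d * log m := by push_cast; exact log_pow _ _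
    _ ≤ d * (n * (3 * (1 + log d))) := by gcongr
    _ = 3 * n * d * (1 + log d) := by ring

end Estimates

theorem stmt7_general (n d : ℕ) (hd : 0 < d) :
    ∃ (M : ℕ) (x : Fin M → EuclideanSpace ℝ (Fin d → Fin n)),
      (∀ k, ‖x k‖ ≤ 1) ∧
      (∀ k, ∃ y : Fin d → EuclideanSpace ℝ (Fin n),
        (∀ l, ‖y l‖ ≤ 1) ∧ x k = tensorProd n d y) ∧
      Real.log M ≤ 3 * n * d * (1 + Real.log d) ∧
      absConv {t | ∃ y : Fin d → EuclideanSpace ℝ (Fin n),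
          (∀ l, ‖y l‖ ≤ 1) ∧ t = tensorProd n d y} ⊆
        Real.exp 1 • absConv (Set.range x) := by
  set ε : ℝ≥0 := (3 * d)⁻¹
  obtain ⟨s, hs, hcov, hcard⟩ :=
    exists_finset_isCover_closedBall (E := EuclideanSpace ℝ (Fin n)) (ε := ε) (by positivity)
  set δ : ℝ := (1 + ε) ^ d - 1
  have hδ0 : 0 ≤ δ := by simp [δ, one_le_pow₀]
  have hδ : δ ≤ 1 / 2 := by
    have := one_add_inv_three_mul_pow_le d
    simp only [δ, ε]; push_cast; linarith
  refine ⟨_, netTensors n d s, fun k => mem_closedBall_zero_iff.1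
    (rankOneBall_subset_closedBall (netTensors_mem_rankOneBall hs k)),
    netTensors_mem_rankOneBall hs, ?_, ?_⟩
  · rw [Fintype.card_fun, Fintype.card_coe, Fintype.card_fin]
    refine log_pow_le_of_le_one_add_six_mul_pow hd (hcard.trans_eq ?_)
    rw [finrank_euclideanSpace, Fintype.card_fin, NNReal.coe_inv, div_inv_eq_mul]
    push_cast
    ring
  · have hδe : ‖(1 - δ)⁻¹‖ ≤ ‖Real.exp 1‖ := by
      rw [Real.norm_of_nonneg (inv_nonneg.2 (by linarith)), Real.norm_of_nonneg (Real.exp_pos 1).le]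
      calc (1 - δ)⁻¹ ≤ 2 := inv_le_of_inv_le₀ (by norm_num) (by linarith)
        _ ≤ Real.exp 1 := by linarith [Real.add_one_le_exp 1]
    calc absConv (rankOneBall n d) ⊆ (1 - δ)⁻¹ • absConv (Set.range (netTensors n d s)) :=
          absConv_subset_of_subset_add_smul_absConv (absConvex_absConv _) (zero_mem_absConv _)
            (isCompact_absConv_range _).isClosed rankOneBall_subset_closedBall hδ0
            (by linarith) (rankOneBall_subset_add_smul_absConv (by positivity) hs hcov)
      _ ⊆ Real.exp 1 • absConv (Set.range (netTensors n d s)) :=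
          (absConvex_absConv _).1.smul_mono hδe

/-- Tensor net lemma. With `N = n^d` and `K ⊆ B₂^N` the absolute
convex hull of the rank-one tensors with factors in `B₂^n`, there exist `M`
rank-one tensors `x₁,…,x_M` of norm at most `1`, with `ln M ≤ 3nd(1 + ln d)`,
such that `K ⊆ e · absconv{x₁,…,x_M}`. -/
theorem stmt7 (n d : ℕ) (hn : 0 < n) (hd : 0 < d) :
    ∃ (M : ℕ) (x : Fin M → EuclideanSpace ℝ (Fin d → Fin n)),
      (∀ k, ‖x k‖ ≤ 1) ∧
      (∀ k, ∃ y : Fin d → EuclideanSpace ℝ (Fin n),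
        (∀ l, ‖y l‖ ≤ 1) ∧ x k = tensorProd n d y) ∧
      Real.log M ≤ 3 * n * d * (1 + Real.log d) ∧
      absConv {t | ∃ y : Fin d → EuclideanSpace ℝ (Fin n),
          (∀ l, ‖y l‖ ≤ 1) ∧ t = tensorProd n d y} ⊆
        Real.exp 1 • absConv (Set.range x) :=
  stmt7_general n d hd
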